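/- Consider a serial chain where point x_i on link i satisfies x_i' = ẋ_0 + ω_0 × (x_i - c_0) + ∑_{j=1}^{i} ω_j × (x_i - ℓ_j), with ‖x_i - c_0‖ ≤ γ_0 and ‖x_i - ℓ_j‖ ≤ γ_j for each revolute joint j having joint angular velocity ω_j. Then for any unit vector d̂, |⟨d̂, x_i'⟩| ≤ |⟨d̂, ẋ_0⟩| + ‖ω_0‖γ_0 + ∑_{j=1}^i ‖ω_j‖γ_j. -/
import Mathlib

open scoped RealInnerProductSpace

noncomputable def cross3 (a b : EuclideanSpace ℝ (Fin 3)) : EuclideanSpace ℝ (Fin 3) :=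
  (WithLp.equiv 2 (Fin 3 → ℝ)).symm
    (crossProduct ((WithLp.equiv 2 (Fin 3 → ℝ)) a) ((WithLp.equiv 2 (Fin 3 → ℝ)) b))

lemma norm_cross3_le (a b : EuclideanSpace ℝ (Fin 3)) : ‖cross3 a b‖ ≤ ‖a‖ * ‖b‖ := by
  have hab : ‖a‖ * ‖b‖ = Real.sqrt ((∑ i, a i ^ 2) * (∑ i, b i ^ 2)) := by
    rw [EuclideanSpace.norm_eq, EuclideanSpace.norm_eq, ← Real.sqrt_mul (by positivity)]
    simp [sq_abs]
  rw [EuclideanSpace.norm_eq, hab]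
  apply Real.sqrt_le_sqrt
  have ha : (∑ i, a i ^ 2) = a 0 ^ 2 + a 1 ^ 2 + a 2 ^ 2 := by
    simp [Fin.sum_univ_three]
  have hb : (∑ i, b i ^ 2) = b 0 ^ 2 + b 1 ^ 2 + b 2 ^ 2 := by
    simp [Fin.sum_univ_three]
  simp only [Real.norm_eq_abs, sq_abs, ha, hb, Fin.sum_univ_three]
  have h0 : cross3 a b 0 = a 1 * b 2 - a 2 * b 1 := rfl
  have h1 : cross3 a b 1 = a 2 * b 0 - a 0 * b 2 := rfl
  have h2 : cross3 a b 2 = a 0 * b 1 - a 1 * b 0 := rfl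
  rw [h0, h1, h2]
  nlinarith [sq_nonneg (a 0 * b 0 + a 1 * b 1 + a 2 * b 2)]

lemma inner_cross3_le (d a b : EuclideanSpace ℝ (Fin 3)) (hd : ‖d‖ = 1) :
    |⟪d, cross3 a b⟫| ≤ ‖a‖ * ‖b‖ := by
  calc |⟪d, cross3 a b⟫| ≤ ‖d‖ * ‖cross3 a b‖ := abs_real_inner_le_norm _ _
    _ = ‖cross3 a b‖ := by rw [hd, one_mul]
    _ ≤ ‖a‖ * ‖b‖ := norm_cross3_le a b

/-- Multibody conservative advancement bound: the projected speed of a point on link i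
of a serial chain is bounded by the base contribution plus joint contributions. -/
theorem stmt_19 (k : ℕ)
    (x c₀ x₀dot ω₀ : ℝ → EuclideanSpace ℝ (Fin 3))
    (ω ℓ : Fin k → ℝ → EuclideanSpace ℝ (Fin 3))
    (γ₀ : ℝ) (γ : Fin k → ℝ)
    (dhat : EuclideanSpace ℝ (Fin 3)) (hdhat : ‖dhat‖ = 1)
    (hx : ∀ t, deriv x t =
      x₀dot t + cross3 (ω₀ t) (x t - c₀ t) + ∑ j, cross3 (ω j t) (x t - ℓ j t))
    (hγ₀ : ∀ t, ‖x t - c₀ t‖ ≤ γ₀)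
    (hγ : ∀ j t, ‖x t - ℓ j t‖ ≤ γ j) :
    ∀ t, |⟪dhat, deriv x t⟫| ≤ |⟪dhat, x₀dot t⟫| + ‖ω₀ t‖ * γ₀ + ∑ j, ‖ω j t‖ * γ j := by
  intro t
  rw [hx t, inner_add_right, inner_add_right, inner_sum]
  refine (abs_add_le _ _).trans (add_le_add ((abs_add_le _ _).trans (add_le_add le_rfl ?_)) ?_)
  · calc |⟪dhat, cross3 (ω₀ t) (x t - c₀ t)⟫| ≤ ‖ω₀ t‖ * ‖x t - c₀ t‖ :=
        inner_cross3_le _ _ _ hdhat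
      _ ≤ ‖ω₀ t‖ * γ₀ := by
        exact mul_le_mul_of_nonneg_left (hγ₀ t) (norm_nonneg _)
  · refine (Finset.abs_sum_le_sum_abs _ _).trans (Finset.sum_le_sum fun j _ => ?_)
    calc |⟪dhat, cross3 (ω j t) (x t - ℓ j t)⟫| ≤ ‖ω j t‖ * ‖x t - ℓ j t‖ :=
        inner_cross3_le _ _ _ hdhat
      _ ≤ ‖ω j t‖ * γ j := mul_le_mul_of_nonneg_left (hγ j t) (norm_nonneg _)
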